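/- In the dihedral group Dₙ with n odd, there are no homoclinic triples. In particular, if K is a subgroup of Dₙ (n odd) containing a reflection κ, and g = ρʳ for some r, and H contains both K and g⁻¹Kg, then gH intersects N(K) nontrivially. -/

import Mathlib

/-- The conjugate subgroup `g H g⁻¹`. -/
def conjSub {G : Type*} [Group G] (g : G) (H : Subgroup G) : Subgroup G :=
  H.map (MulAut.conj g).toMonoidHom

/-- `(K, g, H)` is a homoclinic triple: [HT1] the coset `gH` is disjoint from the
normalizer of `K`, and [HT2] `K` is a proper subgroup of both `H` and `gHg⁻¹`. -/
def HomoclinicTriple {G : Type*} [Group G] (K : Subgroup G) (g : G) (H : Subgroup G) : Prop :=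
  (∀ h ∈ H, g * h ∉ Subgroup.normalizer (K : Set G)) ∧ K < H ∧ K < conjSub g H

/-!
If `K` has no reflections it consists of rotations and is normal, so all of `Dₙ` normalizes it.
Otherwise `K` contains a reflection `κ`, and `κ, g⁻¹κg ∈ H` forces `g ∈ H` when `n` is odd:
for `g = ρ^s` the product `κ⁻¹ · g⁻¹κg` is `ρ^{2s}`, for `g = κ'` another reflection it is the
square of the rotation `κ⁻¹κ'`; as squaring is a bijection on the cyclic group of odd order `n`,
`H` contains `ρ^s`, resp. `κ⁻¹κ'` and hence `κ'`. But then `g · g⁻¹ = 1` lies in `gH ∩ N(K)`.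
-/

theorem mem_conjSub_iff {G : Type*} [Group G] {g x : G} {H : Subgroup G} :
    x ∈ conjSub g H ↔ g⁻¹ * x * g ∈ H := by
  rw [conjSub, Subgroup.mem_map_equiv, MulAut.conj_symm_apply]

namespace DihedralGroup

variable {n : ℕ}

theorem r_mem_of_r_two_mul_mem (hn : Odd n) {H : Subgroup (DihedralGroup n)} {x : ZMod n}
    (h : r (2 * x) ∈ H) : r x ∈ H := by
  obtain ⟨m, rfl⟩ := hn
  have h_two_mul : (2 * x) * ((m + 1 : ℕ) : ZMod (2 * m + 1)) = x := by
    have h_char : ((2 * m + 1 : ℕ) : ZMod (2 * m + 1)) = 0 := ZMod.natCast_self _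
    push_cast at h_char ⊢
    linear_combination x * h_char
  simpa only [r_pow, h_two_mul] using H.pow_mem h (m + 1)

theorem normal_of_forall_sr_notMem {K : Subgroup (DihedralGroup n)} (hK : ∀ i, sr i ∉ K) :
    K.Normal where
  conj_mem := by
    rintro (j | j) hj (a | a)
    · simpa [r_mul_r, inv_r] using hj
    · simpa [sr_mul_r, sr_mul_sr, inv_sr, inv_r] using K.inv_mem hj
    · exact absurd hj (hK j)
    · exact absurd hj (hK j)

theorem mem_of_sr_mem_of_conj_mem (hn : Odd n) {H : Subgroup (DihedralGroup n)} {i : ZMod n}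
    {g : DihedralGroup n} (hi : sr i ∈ H) (hg : g⁻¹ * sr i * g ∈ H) : g ∈ H := by
  have h_rot := H.mul_mem (H.inv_mem hi) hg
  cases g with
  | r s =>
    simp only [inv_r, inv_sr, r_mul_sr, sr_mul_r, sr_mul_sr] at h_rot
    exact r_mem_of_r_two_mul_mem hn (by convert h_rot using 2; ring)
  | sr s =>
    simp only [inv_sr, sr_mul_sr, r_mul_sr] at h_rot
    have h_half : r (s - i) ∈ H := r_mem_of_r_two_mul_mem hn (by convert h_rot using 2; ring)
    simpa [sr_mul_r] using H.mul_mem hi h_half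

end DihedralGroup

open DihedralGroup in
theorem Dn_odd_no_triple (n : ℕ) (hn : Odd n) :
    (¬ ∃ (K H : Subgroup (DihedralGroup n)) (g : DihedralGroup n),
        HomoclinicTriple K g H) ∧
    (∀ (K H : Subgroup (DihedralGroup n)) (r : ZMod n),
        (∃ i, DihedralGroup.sr i ∈ K) →
        K ≤ H → conjSub (DihedralGroup.r r)⁻¹ K ≤ H →
        ∃ h ∈ H, DihedralGroup.r r * h ∈ Subgroup.normalizer (K : Set (DihedralGroup n))) := by
  refine ⟨?_, ?_⟩
  · rintro ⟨K, H, g, h_disjoint, hKH, hKgH⟩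
    by_cases hK : ∃ i, sr i ∈ K
    · obtain ⟨i, hi⟩ := hK
      have hg : g ∈ H :=
        mem_of_sr_mem_of_conj_mem hn (hKH.le hi) (mem_conjSub_iff.1 (hKgH.le hi))
      exact h_disjoint g⁻¹ (H.inv_mem hg) (by simp)
    · simp only [not_exists] at hK
      have := normal_of_forall_sr_notMem hK
      exact h_disjoint 1 H.one_mem (Subgroup.subset_normalizer_of_normal (Set.mem_univ _))
  · rintro K H r ⟨i, hi⟩ hKH h_conj
    have h_conj_mem : (DihedralGroup.r r)⁻¹ * sr i * DihedralGroup.r r ∈ H :=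
      h_conj (by simpa using mem_conjSub_iff.2 (by simpa using hi))
    have hg := mem_of_sr_mem_of_conj_mem hn (hKH hi) h_conj_mem
    exact ⟨_, H.inv_mem hg, by simp⟩
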